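/- arXiv:2204.05817 — 2 statements merged into one kernel-verified Lean document; each statement's English description precedes it below -/
import Mathlib

section
/- Let n, k be positive integers with k dividing n. The function OneMaxBlocks is unimodal: every x ∈ {0,1}^n with OneMaxBlocks(x) < n has a Hamming neighbour y (differing from x in exactly one bit) with OneMaxBlocks(y) > OneMaxBlocks(x). -/
/-- OneMaxBlocks: the number of one-bits in the longest prefix of complete
all-ones blocks of length `k`, plus the number of one-bits in the first
incomplete block (bits are indexed `1, ..., n`). -/
def OneMaxBlocks (n k : ℕ) (x : ℕ → Bool) : ℕ :=
  ∑ j ∈ Finset.Icc 1 (n / k),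
    (∏ i ∈ Finset.Icc 1 ((j - 1) * k), (if x i then 1 else 0)) *
      ∑ i ∈ Finset.Icc ((j - 1) * k + 1) (j * k), (if x i then 1 else 0)

theorem stmt_14 (n k : ℕ) (hn : 0 < n) (hk : 0 < k) (hdvd : k ∣ n)
    (x : ℕ → Bool) (hx : OneMaxBlocks n k x < n) :
    ∃ i ∈ Finset.Icc 1 n,
      OneMaxBlocks n k (Function.update x i (!x i)) > OneMaxBlocks n k x := by
  have hmk : n / k * k = n := Nat.div_mul_cancel hdvd
  have hm1 : 1 ≤ n / k :=
    (Nat.one_le_div_iff hk).mpr (Nat.le_of_dvd hn hdvd)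
  -- there is a false bit in [1, n]
  have hne : ∃ i, 1 ≤ i ∧ i ≤ n ∧ x i = false := by
    by_contra h
    push_neg at h
    have hall : ∀ i, 1 ≤ i → i ≤ n → x i = true := by
      intro i h1 h2
      cases hxi : x i with
      | false => exact absurd hxi (h i h1 h2)
      | true => rfl
    have heq : OneMaxBlocks n k x = n := by
      unfold OneMaxBlocks
      have step : ∀ j ∈ Finset.Icc 1 (n / k),
          (∏ i ∈ Finset.Icc 1 ((j - 1) * k), (if x i then (1:ℕ) else 0)) *
            (∑ i ∈ Finset.Icc ((j - 1) * k + 1) (j * k), (if x i then (1:ℕ) else 0)) = k := by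
        intro j hj
        simp only [Finset.mem_Icc] at hj
        have hjk : j * k ≤ n := by
          calc j * k ≤ n / k * k := Nat.mul_le_mul_right k hj.2
          _ = n := hmk
        have hjk' : (j - 1) * k ≤ j * k := Nat.mul_le_mul_right k (by omega)
        have hsmul : (j - 1) * k + k = j * k := by
          cases j with
          | zero => omega
          | succ jj => simp [Nat.succ_sub_one, Nat.succ_mul]
        have hprod : (∏ i ∈ Finset.Icc 1 ((j - 1) * k), (if x i then (1:ℕ) else 0)) = 1 := by
          apply Finset.prod_eq_one
          intro i hi
          simp only [Finset.mem_Icc] at hi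
          simp [hall i hi.1 (by omega)]
        have hone : ∀ i ∈ Finset.Icc ((j - 1) * k + 1) (j * k),
            (if x i then (1:ℕ) else 0) = 1 := by
          intro i hi
          simp only [Finset.mem_Icc] at hi
          simp [hall i (by omega) (by omega)]
        rw [hprod, one_mul, Finset.sum_congr rfl hone, Finset.sum_const, Nat.card_Icc,
          smul_eq_mul, mul_one]
        omega
      rw [Finset.sum_congr rfl step, Finset.sum_const, Nat.card_Icc, smul_eq_mul]
      simp only [Nat.add_sub_cancel]
      exact hmk
    omega
  -- least false bit
  classical
  have hP : ∃ i, 1 ≤ i ∧ i ≤ n ∧ x i = false := hne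
  set i₀ := Nat.find hP with hi₀def
  obtain ⟨hi1, hin, hxf⟩ : 1 ≤ i₀ ∧ i₀ ≤ n ∧ x i₀ = false := Nat.find_spec hP
  have hmin : ∀ i, 1 ≤ i → i < i₀ → x i = true := by
    intro i h1 h2
    have := Nat.find_min hP h2
    push_neg at this
    cases hxi : x i with
    | false => exact absurd hxi (this h1 (by omega))
    | true => rfl
  -- block of i₀ : j₀ = q + 1
  obtain ⟨q, hq1, hq2, hq3⟩ : ∃ q, q * k < i₀ ∧ i₀ ≤ q * k + k ∧ q + 1 ≤ n / k := by
    refine ⟨(i₀ - 1) / k, ?_, ?_, ?_⟩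
    · have := Nat.div_mul_le_self (i₀ - 1) k
      omega
    · have h1 : (i₀ - 1) / k * k + (i₀ - 1) % k = i₀ - 1 := by
        rw [mul_comm]; exact Nat.div_add_mod _ _
      have h2 : (i₀ - 1) % k < k := Nat.mod_lt _ hk
      omega
    · have : (i₀ - 1) / k < n / k := by
        rw [Nat.div_lt_iff_lt_mul hk, hmk]; omega
      omega
  refine ⟨i₀, Finset.mem_Icc.mpr ⟨hi1, hin⟩, ?_⟩
  set y := Function.update x i₀ (!x i₀) with hy
  have hy0 : y i₀ = true := by simp [hy, hxf]
  have hyne : ∀ i, i ≠ i₀ → y i = x i := by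
    intro i hi; simp [hy, Function.update_of_ne hi]
  show OneMaxBlocks n k x < OneMaxBlocks n k y
  unfold OneMaxBlocks
  apply Finset.sum_lt_sum
  · intro j hj
    simp only [Finset.mem_Icc] at hj
    by_cases hc : i₀ ≤ (j - 1) * k
    · have hz : (∏ i ∈ Finset.Icc 1 ((j - 1) * k), (if x i then (1:ℕ) else 0)) = 0 := by
        apply Finset.prod_eq_zero (Finset.mem_Icc.mpr ⟨hi1, hc⟩)
        simp [hxf]
      rw [hz, zero_mul]
      exact Nat.zero_le _
    · push_neg at hc
      have hprod : (∏ i ∈ Finset.Icc 1 ((j - 1) * k), (if y i then (1:ℕ) else 0))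
          = ∏ i ∈ Finset.Icc 1 ((j - 1) * k), (if x i then (1:ℕ) else 0) := by
        apply Finset.prod_congr rfl
        intro i hi
        simp only [Finset.mem_Icc] at hi
        rw [hyne i (by omega)]
      have hsum : (∑ i ∈ Finset.Icc ((j - 1) * k + 1) (j * k), (if x i then (1:ℕ) else 0))
          ≤ ∑ i ∈ Finset.Icc ((j - 1) * k + 1) (j * k), (if y i then (1:ℕ) else 0) := by
        apply Finset.sum_le_sum
        intro i hi
        by_cases hii : i = i₀
        · subst hii; simp [hxf, hy0]
        · rw [hyne i hii]
      rw [hprod]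
      exact Nat.mul_le_mul_left _ hsum
  · refine ⟨q + 1, Finset.mem_Icc.mpr ⟨by omega, hq3⟩, ?_⟩
    simp only [Nat.add_sub_cancel]
    have hpx : (∏ i ∈ Finset.Icc 1 (q * k), (if x i then (1:ℕ) else 0)) = 1 := by
      apply Finset.prod_eq_one
      intro i hi
      simp only [Finset.mem_Icc] at hi
      simp [hmin i hi.1 (by omega)]
    have hpy : (∏ i ∈ Finset.Icc 1 (q * k), (if y i then (1:ℕ) else 0)) = 1 := by
      apply Finset.prod_eq_one
      intro i hi
      simp only [Finset.mem_Icc] at hi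
      rw [hyne i (by omega)]
      simp [hmin i hi.1 (by omega)]
    rw [hpx, hpy, one_mul, one_mul]
    apply Finset.sum_lt_sum
    · intro i hi
      by_cases hii : i = i₀
      · subst hii; simp [hxf, hy0]
      · rw [hyne i hii]
    · have hub : i₀ ≤ (q + 1) * k := by
        have : (q + 1) * k = q * k + k := by ring
        omega
      refine ⟨i₀, Finset.mem_Icc.mpr ⟨by omega, hub⟩, ?_⟩
      simp [hxf, hy0]
end

section
/- Let n, k be positive integers with k dividing n, and let x ∈ {0,1}^n with i := OneMaxBlocks(x) < n. Then any y ∈ {0,1}^n with OneMaxBlocks(y) > OneMaxBlocks(x) differs from x in at least one of the k - (i mod k) zero-bit positions of the first incomplete block of x. In particular, the first incomplete block of x contains exactly k - (i mod k) zero-bits. -/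
/-- Blocks `1, ..., t` of `x` are all complete. -/
def Pref (k : ℕ) (x : ℕ → Bool) (t : ℕ) : Prop :=
  ∀ i ∈ Finset.Icc 1 (t * k), x i = true

instance (k : ℕ) (x : ℕ → Bool) : DecidablePred (Pref k x) :=
  fun t => inferInstanceAs (Decidable (∀ i ∈ Finset.Icc 1 (t * k), x i = true))

lemma Pref_mono {k : ℕ} {x : ℕ → Bool} {s t : ℕ} (h : s ≤ t) (ht : Pref k x t) :
    Pref k x s := fun i hi =>
  ht i (Finset.Icc_subset_Icc_right (Nat.mul_le_mul_right k h) hi)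

lemma prod_eq_ite {k : ℕ} {x : ℕ → Bool} (t : ℕ) :
    (∏ i ∈ Finset.Icc 1 (t * k), (if x i then (1 : ℕ) else 0))
      = (if Pref k x t then 1 else 0) := by
  by_cases h : Pref k x t
  · rw [if_pos h]
    exact Finset.prod_eq_one (fun i hi => by simp [h i hi])
  · rw [if_neg h]
    simp only [Pref, not_forall] at h
    obtain ⟨i, hi, hxi⟩ := h
    exact Finset.prod_eq_zero hi (by simp [Bool.not_eq_true] at hxi; simp [hxi])

lemma sum_blocks (k : ℕ) (f : ℕ → ℕ) (t : ℕ) :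
    ∑ j ∈ Finset.Icc 1 t, ∑ i ∈ Finset.Icc ((j - 1) * k + 1) (j * k), f i
      = ∑ i ∈ Finset.Icc 1 (t * k), f i := by
  induction t with
  | zero => simp
  | succ t ih =>
    rw [Finset.sum_Icc_succ_top (by omega), ih]
    have h1 : ∀ a b : ℕ, Finset.Icc (a + 1) b = Finset.Ioc a b := fun a b =>
      Finset.Icc_add_one_left_eq_Ioc a b
    rw [show (t + 1 - 1) * k = t * k by congr 1, show (1:ℕ) = 0 + 1 from rfl, h1, h1, h1]
    exact Finset.sum_Ioc_consecutive f (Nat.zero_le _) (Nat.mul_le_mul_right k (by omega))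

/-- The sum of indicator of ones over a block equals the card of the true-filter. -/
lemma sum_boole' (x : ℕ → Bool) (s : Finset ℕ) :
    (∑ i ∈ s, if x i then (1:ℕ) else 0) = (s.filter (fun i => x i = true)).card := by
  simp [Finset.sum_boole]

lemma fitness_eq (n k : ℕ) (hk : 0 < k) (x : ℕ → Bool)
    (m : ℕ) (hm : Pref k x m) (hm1 : ¬ Pref k x (m + 1)) (hmq : m < n / k) :
    OneMaxBlocks n k x
      = m * k + ∑ i ∈ Finset.Icc (m * k + 1) (m * k + k), (if x i then 1 else 0) := by
  unfold OneMaxBlocks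
  have hterm : ∀ j ∈ Finset.Icc 1 (n / k),
      (∏ i ∈ Finset.Icc 1 ((j - 1) * k), (if x i then (1:ℕ) else 0)) *
        (∑ i ∈ Finset.Icc ((j - 1) * k + 1) (j * k), (if x i then 1 else 0))
      = if j ≤ m + 1 then (∑ i ∈ Finset.Icc ((j - 1) * k + 1) (j * k), (if x i then 1 else 0))
        else 0 := by
    intro j hj
    rw [prod_eq_ite]
    by_cases hjm : j ≤ m + 1
    · rw [if_pos hjm, if_pos (Pref_mono (by omega) hm), one_mul]
    · rw [if_neg hjm, if_neg, zero_mul]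
      intro hP
      exact hm1 (Pref_mono (by omega) hP)
  rw [Finset.sum_congr rfl hterm]
  have hsplit : Finset.Icc 1 (n / k) = Finset.Icc 1 (m + 1) ∪ Finset.Icc (m + 2) (n / k) := by
    ext a
    simp only [Finset.mem_Icc, Finset.mem_union]
    omega
  rw [hsplit, Finset.sum_union (by
    apply Finset.disjoint_left.mpr
    intro a ha hb
    simp only [Finset.mem_Icc] at ha hb
    omega)]
  have h2 : ∑ j ∈ Finset.Icc (m + 2) (n / k),
      (if j ≤ m + 1 then (∑ i ∈ Finset.Icc ((j - 1) * k + 1) (j * k), (if x i then (1:ℕ) else 0))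
        else 0) = 0 := by
    apply Finset.sum_eq_zero
    intro j hj
    simp only [Finset.mem_Icc] at hj
    rw [if_neg (by omega)]
  rw [h2, add_zero]
  have h3 : ∑ j ∈ Finset.Icc 1 (m + 1),
      (if j ≤ m + 1 then (∑ i ∈ Finset.Icc ((j - 1) * k + 1) (j * k), (if x i then (1:ℕ) else 0))
        else 0)
      = ∑ j ∈ Finset.Icc 1 (m + 1),
        ∑ i ∈ Finset.Icc ((j - 1) * k + 1) (j * k), (if x i then (1:ℕ) else 0) := by
    apply Finset.sum_congr rfl
    intro j hj
    simp only [Finset.mem_Icc] at hj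
    rw [if_pos hj.2]
  rw [h3, sum_blocks]
  have h4 : Finset.Icc 1 ((m + 1) * k)
      = Finset.Icc 1 (m * k) ∪ Finset.Icc (m * k + 1) (m * k + k) := by
    have hmk : (m + 1) * k = m * k + k := by ring
    ext a
    simp only [Finset.mem_Icc, Finset.mem_union, hmk]
    omega
  rw [h4, Finset.sum_union (by
    apply Finset.disjoint_left.mpr
    intro a ha hb
    simp only [Finset.mem_Icc] at ha hb
    omega)]
  congr 1
  calc ∑ i ∈ Finset.Icc 1 (m * k), (if x i then (1:ℕ) else 0)
      = ∑ i ∈ Finset.Icc 1 (m * k), 1 := by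
        apply Finset.sum_congr rfl
        intro i hi
        rw [if_pos (hm i hi)]
    _ = m * k := by simp
    
lemma full_fitness (n k : ℕ) (hk : 0 < k) (hdvd : k ∣ n) (x : ℕ → Bool)
    (hq : Pref k x (n / k)) : OneMaxBlocks n k x = n := by
  unfold OneMaxBlocks
  have hterm : ∀ j ∈ Finset.Icc 1 (n / k),
      (∏ i ∈ Finset.Icc 1 ((j - 1) * k), (if x i then (1:ℕ) else 0)) *
        (∑ i ∈ Finset.Icc ((j - 1) * k + 1) (j * k), (if x i then 1 else 0))
      = ∑ i ∈ Finset.Icc ((j - 1) * k + 1) (j * k), (if x i then 1 else 0) := by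
    intro j hj
    simp only [Finset.mem_Icc] at hj
    rw [prod_eq_ite, if_pos (Pref_mono (by omega) hq), one_mul]
  rw [Finset.sum_congr rfl hterm, sum_blocks]
  calc ∑ i ∈ Finset.Icc 1 (n / k * k), (if x i then (1:ℕ) else 0)
      = ∑ i ∈ Finset.Icc 1 (n / k * k), 1 := by
        apply Finset.sum_congr rfl
        intro i hi
        rw [if_pos (hq i hi)]
    _ = n / k * k := by simp
    _ = n := Nat.div_mul_cancel hdvd

/-- Structural data for a point of fitness < n. -/
lemma fitness_struct (n k : ℕ) (hk : 0 < k) (hdvd : k ∣ n) (x : ℕ → Bool)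
    (hnP : ¬ Pref k x (n / k)) :
    ∃ m s : ℕ, m < n / k ∧ Pref k x m ∧ ¬ Pref k x (m + 1) ∧
      m = Nat.findGreatest (Pref k x) (n / k) ∧
      s = ((Finset.Icc (m * k + 1) (m * k + k)).filter (fun i => x i = true)).card ∧
      s < k ∧ OneMaxBlocks n k x = m * k + s := by
  set m := Nat.findGreatest (Pref k x) (n / k) with hm_def
  have hP0 : Pref k x 0 := by intro i hi; simp at hi
  have hmP : Pref k x m := Nat.findGreatest_spec (Nat.zero_le _) hP0
  have hmle : m ≤ n / k := Nat.findGreatest_le _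
  have hmlt : m < n / k := lt_of_le_of_ne hmle (fun h => hnP (h ▸ hmP))
  have hm1 : ¬ Pref k x (m + 1) :=
    Nat.findGreatest_is_greatest (Nat.lt_succ_self m) (by omega)
  have hF := fitness_eq n k hk x m hmP hm1 hmlt
  rw [sum_boole'] at hF
  refine ⟨m, _, hmlt, hmP, hm1, rfl, rfl, ?_, hF⟩
  -- s < k
  have hsub : (Finset.Icc (m * k + 1) (m * k + k)).filter (fun i => x i = true)
      ⊆ Finset.Icc (m * k + 1) (m * k + k) := Finset.filter_subset _ _
  simp only [Pref, not_forall] at hm1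
  obtain ⟨i, hi, hxi⟩ := hm1
  simp only [Finset.mem_Icc] at hi
  have hik : i ≤ m * k + k := by
    have : (m + 1) * k = m * k + k := by ring
    omega
  have hilow : m * k + 1 ≤ i := by
    by_contra hcon
    exact hxi (hmP i (Finset.mem_Icc.mpr ⟨hi.1, by omega⟩))
  have hmem : i ∈ Finset.Icc (m * k + 1) (m * k + k) := Finset.mem_Icc.mpr ⟨hilow, hik⟩
  have hnotmem : i ∉ (Finset.Icc (m * k + 1) (m * k + k)).filter (fun i => x i = true) := by
    simp only [Finset.mem_filter]
    tauto
  have hss : (Finset.Icc (m * k + 1) (m * k + k)).filter (fun i => x i = true)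
      ⊂ Finset.Icc (m * k + 1) (m * k + k) := ⟨hsub, fun h => hnotmem (h hmem)⟩
  have := Finset.card_lt_card hss
  rwa [Nat.card_Icc, show m * k + k + 1 - (m * k + 1) = k by omega] at this

/-- A search point of fitness `i := OneMaxBlocks x < n` has exactly `k - (i % k)`
zero-bits in its first incomplete block (the block with index `i / k + 1`,
occupying positions `(i/k)*k + 1, ..., (i/k)*k + k`), and any `y` with strictly
larger OneMaxBlocks-value differs from `x` in at least one of these positions. -/
theorem stmt_15 (n k : ℕ) (hn : 0 < n) (hk : 0 < k) (hdvd : k ∣ n)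
    (x : ℕ → Bool) (hx : OneMaxBlocks n k x < n) :
    ((Finset.Icc ((OneMaxBlocks n k x / k) * k + 1)
        ((OneMaxBlocks n k x / k) * k + k)).filter (fun p => x p = false)).card
      = k - OneMaxBlocks n k x % k ∧
    ∀ y : ℕ → Bool, OneMaxBlocks n k y > OneMaxBlocks n k x →
      ∃ p ∈ (Finset.Icc ((OneMaxBlocks n k x / k) * k + 1)
          ((OneMaxBlocks n k x / k) * k + k)).filter (fun p => x p = false),
        y p ≠ x p := by
  have hnP : ¬ Pref k x (n / k) := fun h => by
    rw [full_fitness n k hk hdvd x h] at hx; omega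
  obtain ⟨m, s, hmlt, hmP, hm1, hm_def, hs_def, hsk, hF⟩ :=
    fitness_struct n k hk hdvd x hnP
  have hmod : OneMaxBlocks n k x % k = s := by
    rw [hF, mul_comm m k, Nat.mul_add_mod, Nat.mod_eq_of_lt hsk]
  have hdiv : OneMaxBlocks n k x / k = m := by
    rw [hF, mul_comm m k, Nat.mul_add_div hk, Nat.div_eq_of_lt hsk, add_zero]
  rw [hmod, hdiv]
  have hcards := Finset.card_filter_add_card_filter_not
    (s := Finset.Icc (m * k + 1) (m * k + k)) (p := fun i => x i = true)
  have hfeq : (Finset.Icc (m * k + 1) (m * k + k)).filter (fun p => ¬ x p = true)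
      = (Finset.Icc (m * k + 1) (m * k + k)).filter (fun p => x p = false) := by
    apply Finset.filter_congr
    intro p _
    simp [Bool.not_eq_true]
  rw [hfeq, Nat.card_Icc, show m * k + k + 1 - (m * k + 1) = k by omega, ← hs_def] at hcards
  have hcard_false : ((Finset.Icc (m * k + 1) (m * k + k)).filter
      (fun p => x p = false)).card = k - s := by omega
  refine ⟨hcard_false, ?_⟩
  intro y hy
  by_contra hcon
  push_neg at hcon
  -- y agrees with x on all zero positions of the block
  have hz : ∀ p, m * k + 1 ≤ p → p ≤ m * k + k → x p = false → y p = false := by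
    intro p h1 h2 hxp
    have := hcon p (Finset.mem_filter.mpr ⟨Finset.mem_Icc.mpr ⟨h1, h2⟩, hxp⟩)
    rw [this, hxp]
  -- there is a zero position
  have hne : ((Finset.Icc (m * k + 1) (m * k + k)).filter
      (fun p => x p = false)).Nonempty := by
    rw [← Finset.card_pos, hcard_false]; omega
  obtain ⟨p0, hp0⟩ := hne
  simp only [Finset.mem_filter, Finset.mem_Icc] at hp0
  have hyp0 : y p0 = false := hz p0 hp0.1.1 hp0.1.2 hp0.2
  have hmk1 : (m + 1) * k = m * k + k := by ring
  have hnPy : ¬ Pref k y (n / k) := by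
    intro hPy
    have : y p0 = true := hPy p0 (Finset.mem_Icc.mpr
      ⟨by omega, by
        have : (m + 1) * k ≤ n / k * k := Nat.mul_le_mul_right k (by omega)
        omega⟩)
    rw [hyp0] at this; exact Bool.false_ne_true this
  obtain ⟨m', s', hmlt', hmP', hm1', _, hs_def', hsk', hF'⟩ :=
    fitness_struct n k hk hdvd y hnPy
  -- m' ≤ m
  have hm'le : m' ≤ m := by
    by_contra hcm
    push_neg at hcm
    have hPy1 : Pref k y (m + 1) := Pref_mono (by omega) hmP'
    have : y p0 = true := hPy1 p0 (Finset.mem_Icc.mpr ⟨by omega, by omega⟩)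
    rw [hyp0] at this; exact Bool.false_ne_true this
  have hyF : OneMaxBlocks n k y ≤ OneMaxBlocks n k x := by
    rcases eq_or_lt_of_le hm'le with heq | hlt
    · -- m' = m : s' ≤ s
      have hsub : (Finset.Icc (m * k + 1) (m * k + k)).filter (fun i => y i = true)
          ⊆ (Finset.Icc (m * k + 1) (m * k + k)).filter (fun i => x i = true) := by
        intro p hp
        simp only [Finset.mem_filter, Finset.mem_Icc] at hp ⊢
        refine ⟨hp.1, ?_⟩
        by_contra hxp
        rw [Bool.not_eq_true] at hxp
        have := hz p hp.1.1 hp.1.2 hxp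
        rw [this] at hp
        exact Bool.false_ne_true hp.2
      have hs'le : s' ≤ s := by
        rw [hs_def', hs_def, heq]
        exact Finset.card_le_card (by rw [← heq] at hsub ⊢; exact hsub)
      rw [hF, hF', heq]
      omega
    · -- m' < m
      have h1 : (m' + 1) * k ≤ m * k := Nat.mul_le_mul_right k (by omega)
      rw [hF, hF']
      have : m' * k + s' ≤ m' * k + k := by omega
      calc m' * k + s' ≤ (m' + 1) * k := by rw [add_mul, one_mul]; omega
        _ ≤ m * k := h1
        _ ≤ m * k + s := Nat.le_add_right _ _
  omega
end
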